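/- arXiv:2209.10028 — 6 statements merged into one kernel-verified Lean document; each statement's English description precedes it below -/
import Mathlib

section
/- There exists a quasi-metric on a set of four points, taking values in {0,1,2,3}, which has no universal line and has fewer than four distinct lines (hence fails the de Bruijn–Erdős property). -/
/-- A quasi-metric on `V`: nonnegative, vanishing exactly on the diagonal,
and satisfying the (directed) triangle inequality. -/
def IsQuasiMetric {V : Type*} (d : V → V → ℝ) : Prop :=
  (∀ x y, 0 ≤ d x y) ∧ (∀ x y, d x y = 0 ↔ x = y) ∧ (∀ x y z, d x z ≤ d x y + d y z)

/-- Betweenness: `y` lies between `x` and `z` (all three pairwise distinct). -/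
def BtwQM {V : Type*} (d : V → V → ℝ) (x y z : V) : Prop :=
  x ≠ y ∧ y ≠ z ∧ x ≠ z ∧ d x z = d x y + d y z

/-- The line through `x` and `y`. -/
def lineQM {V : Type*} (d : V → V → ℝ) (x y : V) : Set V :=
  {z | d z y = d z x + d x y ∨ d x y = d x z + d z y ∨ d x z = d x y + d y z}

/-- The set of all lines of the space. -/
def linesQM {V : Type*} (d : V → V → ℝ) : Set (Set V) :=
  {ℓ | ∃ x y, x ≠ y ∧ ℓ = lineQM d x y}

/-! With natural-number distances every property in question is a decidable statement about a
`4 × 4` matrix of naturals. For `fourPointDist` each line through two distinct points is one of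
`{0, 1, 3}`, `{0, 1, 2}` and `{2, 3}`. -/

namespace NatQuasiMetric

variable {V : Type*} (D : V → V → ℕ)

theorem isQuasiMetric_natCast_iff :
    IsQuasiMetric (fun x y => (D x y : ℝ)) ↔
      (∀ x y, D x y = 0 ↔ x = y) ∧ ∀ x y z, D x z ≤ D x y + D y z := by
  simp only [IsQuasiMetric, Nat.cast_nonneg, implies_true, Nat.cast_eq_zero, true_and]
  exact and_congr_right fun _ => forall₃_congr fun _ _ _ => by exact_mod_cast Iff.rfl

variable [Fintype V]

def line (x y : V) : Finset V :=
  {z | D z y = D z x + D x y ∨ D x y = D x z + D z y ∨ D x z = D x y + D y z}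

theorem coe_line (x y : V) : (line D x y : Set V) = lineQM (fun x y => (D x y : ℝ)) x y := by
  ext z
  simp only [line, Finset.coe_filter, Finset.mem_univ, true_and, lineQM, Set.mem_ofPred_eq]
  norm_cast

theorem ncard_linesQM_natCast [DecidableEq V] :
    (linesQM fun x y => (D x y : ℝ)).ncard =
      (Finset.univ.offDiag.image fun p : V × V => line D p.1 p.2).card := by
  have hlines : linesQM (fun x y => (D x y : ℝ)) =
      (fun s : Finset V => (s : Set V)) ''
        ↑(Finset.univ.offDiag.image fun p : V × V => line D p.1 p.2) := by
    ext ℓ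
    simp [linesQM, ← coe_line, eq_comm]
  rw [hlines, Set.ncard_image_of_injective _ Finset.coe_injective, Set.ncard_coe_finset]

end NatQuasiMetric

open NatQuasiMetric

def fourPointDist : Fin 4 → Fin 4 → ℕ :=
  ![![0, 1, 1, 2], ![1, 0, 2, 1], ![3, 2, 0, 2], ![2, 3, 2, 0]]

theorem natCast_mem_of_le_three {n : ℕ} (hn : n ≤ 3) : (n : ℝ) ∈ ({0, 1, 2, 3} : Set ℝ) := by
  interval_cases n <;> simp

/-- there is a quasi-metric on a four-element set, with values in
`{0,1,2,3}`, having no universal line and fewer than four distinct lines. -/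
theorem stmt_3 :
    ∃ (V : Type) (_ : Fintype V) (d : V → V → ℝ),
      Fintype.card V = 4 ∧
      IsQuasiMetric d ∧
      (∀ x y, d x y ∈ ({0, 1, 2, 3} : Set ℝ)) ∧
      (∀ x y : V, x ≠ y → lineQM d x y ≠ Set.univ) ∧
      (linesQM d).ncard < 4 := by
  refine ⟨Fin 4, inferInstance, fun x y => (fourPointDist x y : ℝ), Fintype.card_fin 4,
    (isQuasiMetric_natCast_iff _).2 (by decide), fun x y => natCast_mem_of_le_three ?_, ?_, ?_⟩
  · revert x y; decide
  · intro x y hxy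
    rw [← coe_line, ← Finset.coe_univ, Ne, Finset.coe_inj]
    revert x y; decide
  · rw [ncard_linesQM_natCast]
    decide
end

section
/- Every metric space on four points has the de Bruijn–Erdős property: it has a universal line or at least four distinct lines. -/
theorem Set.four_le_ncard_of_pairwise_ne {α : Type*} {s : Set α} (hs : s.Finite)
    {a b c e : α} (ha : a ∈ s) (hb : b ∈ s) (hc : c ∈ s) (he : e ∈ s)
    (hab : a ≠ b) (hac : a ≠ c) (hae : a ≠ e) (hbc : b ≠ c) (hbe : b ≠ e) (hce : c ≠ e) :
    4 ≤ s.ncard := by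
  have hsub : ({a, b, c, e} : Set α) ⊆ s := by
    rintro x (rfl | rfl | rfl | rfl) <;> assumption
  calc 4 = ({a, b, c, e} : Set α).ncard :=
        (Set.ncard_eq_four.mpr ⟨a, b, c, e, hab, hac, hae, hbc, hbe, hce, rfl⟩).symm
    _ ≤ s.ncard := Set.ncard_le_ncard hsub hs

theorem Fintype.exists_fourth_of_card_eq_four {α : Type*} [Fintype α]
    (hα : Fintype.card α = 4) {x y z : α} (hxy : x ≠ y) (hxz : x ≠ z) (hyz : y ≠ z) :
    ∃ w, w ≠ x ∧ w ≠ y ∧ w ≠ z ∧ ∀ v, v = x ∨ v = y ∨ v = z ∨ v = w := by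
  classical
  have hxyz : ({x, y, z} : Finset α).card = 3 :=
    Finset.card_eq_three.mpr ⟨x, y, z, hxy, hxz, hyz, rfl⟩
  obtain ⟨w, -, hw⟩ := Finset.exists_mem_notMem_of_card_lt_card
    (s := {x, y, z}) (t := Finset.univ) (by rw [hxyz, Finset.card_univ, hα]; norm_num)
  simp only [Finset.mem_insert, Finset.mem_singleton, not_or] at hw
  obtain ⟨hwx, hwy, hwz⟩ := hw
  have hcover : insert w {x, y, z} = (Finset.univ : Finset α) := by
    apply Finset.eq_univ_of_card
    rw [Finset.card_insert_of_notMem (by simp [hwx, hwy, hwz]), hxyz, hα]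
  refine ⟨w, hwx, hwy, hwz, fun v => ?_⟩
  have hv : v ∈ insert w {x, y, z} := hcover ▸ Finset.mem_univ v
  simp only [Finset.mem_insert, Finset.mem_singleton] at hv
  tauto

namespace lineQM

variable {V : Type*} {d : V → V → ℝ}

theorem left_mem (h0 : ∀ x, d x x = 0) (x y : V) : x ∈ lineQM d x y := by
  simp [lineQM, h0]

theorem right_mem (h0 : ∀ x, d x x = 0) (x y : V) : y ∈ lineQM d x y := by
  simp [lineQM, h0]

theorem comm (hsymm : ∀ x y, d x y = d y x) (x y : V) : lineQM d x y = lineQM d y x := by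
  ext z
  simp only [lineQM, Set.mem_ofPred_eq]
  have := hsymm x y; have := hsymm x z; have := hsymm y z
  constructor <;> rintro (h | h | h) <;>
    first | (left; linarith) | (right; left; linarith) | (right; right; linarith)

theorem mem_comm (hsymm : ∀ x y, d x y = d y x) {x y z : V} :
    z ∈ lineQM d x y ↔ y ∈ lineQM d x z := by
  simp only [lineQM, Set.mem_ofPred_eq]
  have := hsymm x y; have := hsymm x z; have := hsymm y z
  constructor <;> rintro (h | h | h) <;>
    first | (left; linarith) | (right; left; linarith) | (right; right; linarith)

theorem notMem_of_ne_univ (h0 : ∀ x, d x x = 0) {a b c w : V}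
    (hcover : ∀ v, v = a ∨ v = b ∨ v = c ∨ v = w) (hc : c ∈ lineQM d a b)
    (hne : lineQM d a b ≠ Set.univ) : w ∉ lineQM d a b := by
  refine fun hw => hne (Set.eq_univ_of_forall fun v => ?_)
  rcases hcover v with rfl | rfl | rfl | rfl
  exacts [left_mem h0 _ _, right_mem h0 _ _, hc, hw]

theorem four_le_ncard_linesQM [Finite V] (h0 : ∀ x, d x x = 0)
    (hsymm : ∀ x y, d x y = d y x) {x y z w : V}
    (hxy : x ≠ y) (hxw : x ≠ w) (hyw : y ≠ w) (hzw : z ≠ w)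
    (hwxy : w ∉ lineQM d x y) (hwxz : w ∉ lineQM d x z) (hwyz : w ∉ lineQM d y z) :
    4 ≤ (linesQM d).ncard := by
  have ne_of_notMem {a c : V} (hwac : w ∉ lineQM d a c) :
      lineQM d a w ≠ lineQM d c w := fun h =>
    hwac (mem_comm hsymm |>.mp (h ▸ left_mem h0 c w))
  have ne_line_xy {a : V} : lineQM d a w ≠ lineQM d x y := fun h =>
    hwxy (h ▸ right_mem h0 a w)
  refine Set.four_le_ncard_of_pairwise_ne (Set.toFinite _) ⟨x, w, hxw, rfl⟩ ⟨y, w, hyw, rfl⟩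
    ⟨z, w, hzw, rfl⟩ ⟨x, y, hxy, rfl⟩ ?_ ?_ ne_line_xy ?_ ne_line_xy ne_line_xy
  exacts [ne_of_notMem hwxy, ne_of_notMem hwxz, ne_of_notMem hwyz]

end lineQM

open lineQM in
/-- every metric space on four points has the de Bruijn–Erdős
property: a universal line or at least four distinct lines. -/
theorem stmt_8 (V : Type) [Fintype V] (hV : Fintype.card V = 4)
    (d : V → V → ℝ) (hd : IsQuasiMetric d) (hsymm : ∀ x y, d x y = d y x) :
    (∃ x y : V, x ≠ y ∧ lineQM d x y = Set.univ) ∨ 4 ≤ (linesQM d).ncard := by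
  have h0 : ∀ x, d x x = 0 := fun x => (hd.2.1 x x).mpr rfl
  by_cases hu : ∃ x y : V, x ≠ y ∧ lineQM d x y = Set.univ
  · exact Or.inl hu
  push Not at hu
  right
  by_cases hcol : ∃ x y z : V, x ≠ y ∧ x ≠ z ∧ y ≠ z ∧ z ∈ lineQM d x y
  · obtain ⟨x, y, z, hxy, hxz, hyz, hz⟩ := hcol
    obtain ⟨w, hwx, hwy, hwz, hcover⟩ := Fintype.exists_fourth_of_card_eq_four hV hxy hxz hyz
    have hy : y ∈ lineQM d x z := (mem_comm hsymm).mp hz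
    have hx : x ∈ lineQM d y z := (mem_comm hsymm).mp (comm hsymm x y ▸ hz)
    refine four_le_ncard_linesQM h0 hsymm hxy hwx.symm hwy.symm hwz.symm
      (notMem_of_ne_univ h0 hcover hz (hu x y hxy))
      (notMem_of_ne_univ h0 (fun v => by have := hcover v; tauto) hy (hu x z hxz))
      (notMem_of_ne_univ h0 (fun v => by have := hcover v; tauto) hx (hu y z hyz))
  · push Not at hcol
    obtain ⟨x, y, z, hxy, hxz, hyz⟩ := Fintype.two_lt_card_iff.mp (by rw [hV]; norm_num)
    obtain ⟨w, hwx, hwy, hwz, -⟩ := Fintype.exists_fourth_of_card_eq_four hV hxy hxz hyz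
    exact four_le_ncard_linesQM h0 hsymm hxy hwx.symm hwy.symm hwz.symm
      (hcol x y w hxy hwx.symm hwy.symm) (hcol x z w hxz hwx.symm hwz.symm)
      (hcol y z w hyz hwy.symm hwz.symm)
end

section
/- Every quasi-metric space on four points with all distances in {0,1,2} has the de Bruijn–Erdős property: it has a universal line or at least four distinct lines. -/
/-!
Off the diagonal every distance is 1 or 2, so the triangle inequality holds automatically and the
space is determined, up to relabelling its points by `Fin 4`, by which of the twelve ordered pairs
are at distance 1. Line membership only involves sums of natural numbers, so for each of the
`2 ^ 12` tables the lines can be computed, and evaluation shows that one of them is universal or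
that at least four of them are distinct.
-/

def HasDeBruijnErdos {V : Type*} (d : V → V → ℝ) : Prop :=
  (∃ x y, x ≠ y ∧ lineQM d x y = Set.univ) ∨ Nat.card V ≤ (linesQM d).ncard

section Relabel

variable {V W : Type*} (e : W ≃ V) (d : V → V → ℝ)

theorem lineQM_comp_equiv (x y : W) :
    lineQM (fun a b => d (e a) (e b)) x y = e ⁻¹' lineQM d (e x) (e y) :=
  rfl

theorem linesQM_comp_equiv :
    linesQM (fun a b => d (e a) (e b)) = Set.preimage e '' linesQM d := by
  ext ℓ
  constructor
  · rintro ⟨x, y, hxy, rfl⟩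
    exact ⟨_, ⟨e x, e y, e.injective.ne hxy, rfl⟩, rfl⟩
  · rintro ⟨_, ⟨x, y, hxy, rfl⟩, rfl⟩
    refine ⟨e.symm x, e.symm y, e.symm.injective.ne hxy, ?_⟩
    simp [lineQM_comp_equiv]

variable {e d} in
theorem HasDeBruijnErdos.of_comp_equiv (h : HasDeBruijnErdos fun a b => d (e a) (e b)) :
    HasDeBruijnErdos d := by
  rcases h with ⟨x, y, hxy, huniv⟩ | hcard
  · refine Or.inl ⟨e x, e y, e.injective.ne hxy, ?_⟩
    rwa [lineQM_comp_equiv, Set.preimage_eq_univ_iff, e.surjective.range_eq, Set.univ_subset_iff]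
      at huniv
  · right
    rwa [linesQM_comp_equiv, Set.ncard_image_of_injective _ (Set.preimage_injective.2 e.surjective),
      Nat.card_congr e] at hcard

end Relabel

section NatValued

-- `Nat.beq` rather than `==`: the kernel evaluates it several times faster.
def onLine {V : Type*} (c : V → V → ℕ) (x y z : V) : Bool :=
  (c z y).beq (c z x + c x y) || (c x y).beq (c x z + c z y) || (c x z).beq (c x y + c y z)

theorem mem_lineQM_natCast {V : Type*} (c : V → V → ℕ) (x y z : V) :
    z ∈ lineQM (fun a b => (c a b : ℝ)) x y ↔ onLine c x y z = true := by
  simp only [lineQM, onLine, Set.mem_ofPred_eq, Bool.or_eq_true, Nat.beq_eq, or_assoc]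
  norm_cast

variable {n : ℕ}

def lineVec (c : Fin n → Fin n → ℕ) (x y : Fin n) : List Bool :=
  (List.finRange n).map (onLine c x y)

def offDiagPairs (n : ℕ) : List (Fin n × Fin n) :=
  (List.finRange n ×ˢ List.finRange n).filter fun p => p.1 != p.2

theorem mem_offDiagPairs {x y : Fin n} : (x, y) ∈ offDiagPairs n ↔ x ≠ y := by
  simp [offDiagPairs, List.mem_product]

def checkDBE (c : Fin n → Fin n → ℕ) : Bool :=
  (offDiagPairs n).any (fun p => (lineVec c p.1 p.2).all id) ||
    n ≤ ((offDiagPairs n).map fun p => lineVec c p.1 p.2).dedup.length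

theorem hasDeBruijnErdos_of_checkDBE (c : Fin n → Fin n → ℕ) (h : checkDBE c = true) :
    HasDeBruijnErdos fun a b => (c a b : ℝ) := by
  classical
  rw [checkDBE, Bool.or_eq_true, decide_eq_true_eq] at h
  rcases h with huniv | hcount
  · obtain ⟨⟨x, y⟩, hxy, huniv⟩ := List.any_eq_true.1 huniv
    refine Or.inl ⟨x, y, mem_offDiagPairs.1 hxy, Set.eq_univ_of_forall fun z => ?_⟩
    simp only [lineVec, List.all_map, List.all_eq_true, List.mem_finRange, true_imp_iff] at huniv
    exact (mem_lineQM_natCast c x y z).2 (huniv z)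
  · right
    let code : Set (Fin n) → List Bool := fun s => (List.finRange n).map fun z => decide (z ∈ s)
    set L := (offDiagPairs n).map fun p => lineVec c p.1 p.2
    have hsub : (L.toFinset : Set (List Bool)) ⊆ code '' linesQM fun a b => (c a b : ℝ) := by
      intro m hm
      obtain ⟨⟨x, y⟩, hxy, rfl⟩ := List.mem_map.1 (List.mem_toFinset.1 hm)
      refine ⟨lineQM (fun a b => (c a b : ℝ)) x y, ⟨x, y, mem_offDiagPairs.1 hxy, rfl⟩, ?_⟩
      simp [code, lineVec, mem_lineQM_natCast]
    rw [Nat.card_eq_fintype_card, Fintype.card_fin]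
    calc n ≤ L.dedup.length := hcount
      _ = (L.toFinset : Set (List Bool)).ncard := by
        rw [Set.ncard_coe_finset, List.card_toFinset]
      _ ≤ (code '' linesQM fun a b => (c a b : ℝ)).ncard := Set.ncard_le_ncard hsub (Set.toFinite _)
      _ ≤ (linesQM fun a b => (c a b : ℝ)).ncard := Set.ncard_image_le (Set.toFinite _)

end NatValued

section Table

variable {V : Type*} [DecidableEq V]

def tableDist (t : V → V → Bool) (x y : V) : ℕ :=
  if x = y then 0 else if t x y then 1 else 2

theorem eq_natCast_tableDist (d : V → V → ℝ) (hd : ∀ x y, d x y = 0 ↔ x = y)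
    (hval : ∀ x y, d x y ∈ ({0, 1, 2} : Set ℝ)) :
    d = fun x y => (tableDist (fun a b => decide (d a b = 1)) x y : ℝ) := by
  funext x y
  by_cases hxy : x = y
  · simp [tableDist, hxy, (hd y y).2 rfl]
  · have h0 : d x y ≠ 0 := fun h => hxy ((hd x y).1 h)
    obtain h | h | h : d x y = 0 ∨ d x y = 1 ∨ d x y = 2 := hval x y
    · exact absurd h h0
    · simp [tableDist, hxy, h]
    · simp [tableDist, hxy, h]

end Table

-- Pattern matching rather than `![...]`, whose lookups the kernel evaluates slowly.
def offDiagTable (b01 b02 b03 b10 b12 b13 b20 b21 b23 b30 b31 b32 : Bool) : Fin 4 → Fin 4 → Bool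
  | 0, 1 => b01 | 0, 2 => b02 | 0, 3 => b03
  | 1, 0 => b10 | 1, 2 => b12 | 1, 3 => b13
  | 2, 0 => b20 | 2, 1 => b21 | 2, 3 => b23
  | 3, 0 => b30 | 3, 1 => b31 | 3, 2 => b32
  | _, _ => false

-- Sixteen kernel checks of 256 tables each: a single one over all 4096 tables takes far longer.
set_option maxHeartbeats 0 in
theorem checkDBE_tableDist_offDiagTable :
    ∀ b01 b02 b03 b10 b12 b13 b20 b21 b23 b30 b31 b32 : Bool,
      checkDBE (tableDist (offDiagTable b01 b02 b03 b10 b12 b13 b20 b21 b23 b30 b31 b32)) = true := by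
  intro b01 b02 b03 b10
  cases b01 <;> cases b02 <;> cases b03 <;> cases b10 <;> decide +kernel

theorem checkDBE_tableDist_fin_four (t : Fin 4 → Fin 4 → Bool) : checkDBE (tableDist t) = true := by
  convert checkDBE_tableDist_offDiagTable (t 0 1) (t 0 2) (t 0 3) (t 1 0) (t 1 2) (t 1 3) (t 2 0)
    (t 2 1) (t 2 3) (t 3 0) (t 3 1) (t 3 2) using 2
  funext i j
  fin_cases i <;> fin_cases j <;> rfl

/-- every quasi-metric space on four points with distances in
`{0,1,2}` has the de Bruijn–Erdős property. -/
theorem stmt_9 (V : Type) [Fintype V] (hV : Fintype.card V = 4)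
    (d : V → V → ℝ) (hd : IsQuasiMetric d)
    (hval : ∀ x y, d x y ∈ ({0, 1, 2} : Set ℝ)) :
    (∃ x y : V, x ≠ y ∧ lineQM d x y = Set.univ) ∨ 4 ≤ (linesQM d).ncard := by
  let e : Fin 4 ≃ V := (Fintype.equivFinOfCardEq hV).symm
  set d' : Fin 4 → Fin 4 → ℝ := fun a b => d (e a) (e b)
  have hd' := eq_natCast_tableDist d' (fun x y => (hd.2.1 _ _).trans e.injective.eq_iff)
    (fun x y => hval _ _)
  have h := hasDeBruijnErdos_of_checkDBE _
    (checkDBE_tableDist_fin_four fun a b => decide (d' a b = 1))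
  rw [← hd'] at h
  simpa only [HasDeBruijnErdos, Nat.card_eq_fintype_card, hV] using h.of_comp_equiv
end

section
/- Every quasi-metric space on three points has the de Bruijn–Erdős property: it has a universal line or at least three distinct lines. -/
section

variable {V : Type*} {d : V → V → ℝ}

lemma IsQuasiMetric.self_eq_zero (hd : IsQuasiMetric d) (x : V) : d x x = 0 :=
  (hd.2.1 x x).2 rfl

lemma pair_subset_lineQM (hd : ∀ x, d x x = 0) (x y : V) : {x, y} ⊆ lineQM d x y := by
  rintro v (rfl | rfl)
  · exact Or.inl (by rw [hd]; ring)
  · exact Or.inr (Or.inr (by rw [hd]; ring))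

lemma lineQM_eq_univ_or_eq_pair (hd : ∀ x, d x x = 0) {x y z : V}
    (hV : ({x, y, z} : Set V) = Set.univ) :
    lineQM d x y = Set.univ ∨ lineQM d x y = {x, y} := by
  have hcover : ∀ v, v = x ∨ v = y ∨ v = z := fun v =>
    (hV.symm ▸ Set.mem_univ v : v ∈ ({x, y, z} : Set V))
  by_cases hz : z ∈ lineQM d x y
  · refine Or.inl (Set.eq_univ_of_forall fun v => ?_)
    rcases hcover v with rfl | rfl | rfl
    exacts [pair_subset_lineQM hd _ _ (Or.inl rfl), pair_subset_lineQM hd _ _ (Or.inr rfl), hz]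
  · refine Or.inr (Set.Subset.antisymm (fun v hv => ?_) (pair_subset_lineQM hd x y))
    rcases hcover v with rfl | rfl | rfl
    exacts [Or.inl rfl, Or.inr rfl, absurd hv hz]

lemma ncard_pairs_eq_three {a b c : V} (hab : a ≠ b) (hac : a ≠ c) (hbc : b ≠ c) :
    ({{a, b}, {a, c}, {b, c}} : Set (Set V)).ncard = 3 := by
  refine Set.ncard_eq_three.2 ⟨_, _, _, fun h => ?_, fun h => ?_, fun h => ?_, rfl⟩
  · have : b ∈ ({a, c} : Set V) := h ▸ Or.inr rfl
    rcases this with h' | h'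
    exacts [hab h'.symm, hbc h']
  all_goals
    have : a ∈ ({b, c} : Set V) := h ▸ Or.inl rfl
    rcases this with h' | h'
    exacts [hab h', hac h']

end

/-- every quasi-metric space on three points has the
de Bruijn–Erdős property: a universal line or at least three distinct lines. -/
theorem stmt_13 (V : Type) [Fintype V] (hV : Fintype.card V = 3)
    (d : V → V → ℝ) (hd : IsQuasiMetric d) :
    (∃ x y : V, x ≠ y ∧ lineQM d x y = Set.univ) ∨ 3 ≤ (linesQM d).ncard := by
  have hdiag := hd.self_eq_zero
  obtain ⟨a, b, c, hab, hac, hbc, huniv⟩ : ∃ a b c : V, a ≠ b ∧ a ≠ c ∧ b ≠ c ∧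
      (Set.univ : Set V) = {a, b, c} := by
    rw [← Set.ncard_eq_three, Set.ncard_univ, Nat.card_eq_fintype_card, hV]
  rcases lineQM_eq_univ_or_eq_pair hdiag huniv.symm with hℓab | hℓab
  · exact Or.inl ⟨a, b, hab, hℓab⟩
  rcases lineQM_eq_univ_or_eq_pair (x := a) (y := c) (z := b) hdiag
    (by rw [Set.pair_comm c b, huniv]) with hℓac | hℓac
  · exact Or.inl ⟨a, c, hac, hℓac⟩
  rcases lineQM_eq_univ_or_eq_pair (x := b) (y := c) (z := a) hdiag
    (by rw [Set.pair_comm c a, Set.insert_comm b a, huniv]) with hℓbc | hℓbc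
  · exact Or.inl ⟨b, c, hbc, hℓbc⟩
  refine Or.inr ((ncard_pairs_eq_three hab hac hbc).symm.le.trans
    (Set.ncard_le_ncard ?_ (Set.toFinite _)))
  rintro ℓ (rfl | rfl | rfl)
  exacts [⟨a, b, hab, hℓab.symm⟩, ⟨a, c, hac, hℓac.symm⟩, ⟨b, c, hbc, hℓbc.symm⟩]
end

section
/- Let (V, d) be a quasi-metric space on a four-element set with no universal line, and suppose a, b, c are pairwise distinct points with (a,b,c) ∈ B(d), i.e., d a c = d a b + d b c. Then line(a,b) = line(a,c) = line(b,c) = {a,b,c}. -/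
/-!
Each of the three lines contains `a`, `b`, `c`: the two points defining it because `d`
vanishes on the diagonal, the third one by the betweenness relation. A line that is not
universal misses a point, and with only four points available it is then exactly `{a, b, c}`.
-/

theorem Set.eq_of_subset_of_ne_univ_of_card_eq_ncard_add_one {V : Type*} [Finite V]
    {s t : Set V} (hst : s ⊆ t) (ht : t ≠ Set.univ) (hcard : Nat.card V = s.ncard + 1) :
    t = s := by
  have ht_lt : t.ncard < Nat.card V := by
    rw [← Set.ncard_univ]
    exact Set.ncard_lt_ncard (Set.ssubset_univ_iff.2 ht)
  exact (Set.eq_of_subset_of_ncard_le hst (by omega)).symm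

section lineQM

variable {V : Type*} {d : V → V → ℝ}

theorem left_mem_lineQM (h0 : ∀ x, d x x = 0) (x y : V) : x ∈ lineQM d x y :=
  Or.inr (Or.inl (by rw [h0, zero_add]))

theorem right_mem_lineQM (h0 : ∀ x, d x x = 0) (x y : V) : y ∈ lineQM d x y :=
  Or.inr (Or.inl (by rw [h0, add_zero]))

variable {a b c : V}

theorem mem_lineQM_of_between_right (hbtw : d a c = d a b + d b c) : c ∈ lineQM d a b :=
  Or.inr (Or.inr hbtw)

theorem mem_lineQM_of_between_middle (hbtw : d a c = d a b + d b c) : b ∈ lineQM d a c :=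
  Or.inr (Or.inl hbtw)

theorem mem_lineQM_of_between_left (hbtw : d a c = d a b + d b c) : a ∈ lineQM d b c :=
  Or.inl hbtw

end lineQM

/-- in a quasi-metric space on four points with no universal line,
if `(a, b, c)` is in the betweenness, then the lines through `a,b`, through `a,c`
and through `b,c` all equal `{a, b, c}`. -/
theorem stmt_16 (V : Type) [Fintype V] (hV : Fintype.card V = 4)
    (d : V → V → ℝ) (hd : IsQuasiMetric d)
    (hnouniv : ∀ x y : V, x ≠ y → lineQM d x y ≠ Set.univ)
    (a b c : V) (h : BtwQM d a b c) :
    lineQM d a b = {a, b, c} ∧ lineQM d a c = {a, b, c} ∧ lineQM d b c = {a, b, c} := by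
  obtain ⟨hab, hbc, hac, hbtw⟩ := h
  have h0 : ∀ x, d x x = 0 := fun x => (hd.2.1 x x).2 rfl
  have hcard : Nat.card V = ({a, b, c} : Set V).ncard + 1 := by
    rw [Set.ncard_eq_three.2 ⟨a, b, c, hab, hac, hbc, rfl⟩, Nat.card_eq_fintype_card, hV]
  have line_eq : ∀ x y, x ≠ y → ({a, b, c} : Set V) ⊆ lineQM d x y →
      lineQM d x y = {a, b, c} := fun x y hxy hsub =>
    Set.eq_of_subset_of_ne_univ_of_card_eq_ncard_add_one hsub (hnouniv x y hxy) hcard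
  simp only [Set.insert_subset_iff, Set.singleton_subset_iff] at line_eq
  exact ⟨line_eq a b hab ⟨left_mem_lineQM h0 a b, right_mem_lineQM h0 a b,
      mem_lineQM_of_between_right hbtw⟩,
    line_eq a c hac ⟨left_mem_lineQM h0 a c, mem_lineQM_of_between_middle hbtw,
      right_mem_lineQM h0 a c⟩,
    line_eq b c hbc ⟨mem_lineQM_of_between_left hbtw, left_mem_lineQM h0 b c,
      right_mem_lineQM h0 b c⟩⟩
end

section
/- Let (V, d) be a quasi-metric space on a three-element set V = {a,b,c}. Then: if B(d) = ∅ the space has exactly 3 distinct lines; if B(d) = {(a,b,c)} it has exactly 4 distinct lines; if B(d) = {(a,b,c),(b,c,a)} it has exactly 2 distinct lines; if B(d) = {(a,b,c),(c,b,a)} it has exactly 1 line, which is universal; and if B(d) = {(a,b,c),(b,c,a),(c,a,b)} it has exactly 1 line, which is universal. -/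
def betweennessQM {V : Type*} (d : V → V → ℝ) : Set (V × V × V) :=
  {t | BtwQM d t.1 t.2.1 t.2.2}

namespace IsQuasiMetric

variable {V : Type*} {d : V → V → ℝ}

lemma apply_self (hd : IsQuasiMetric d) (x : V) : d x x = 0 := (hd.2.1 x x).2 rfl

lemma left_mem_lineQM (hd : IsQuasiMetric d) (x y : V) : x ∈ lineQM d x y :=
  Or.inr <| Or.inl <| by simp [hd.apply_self]

lemma right_mem_lineQM (hd : IsQuasiMetric d) (x y : V) : y ∈ lineQM d x y :=
  Or.inr <| Or.inl <| by simp [hd.apply_self]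

end IsQuasiMetric

section ThreePoints

variable {V : Type*}

open Classical in
noncomputable def threePointLine (B : Set (V × V × V)) (x y w : V) : Set V :=
  if (w, x, y) ∈ B ∨ (x, w, y) ∈ B ∨ (x, y, w) ∈ B then Set.univ else {x, y}

noncomputable def threePointLines (B : Set (V × V × V)) (a b c : V) : Set (Set V) :=
  {threePointLine B a b c, threePointLine B b a c, threePointLine B b c a,
    threePointLine B c b a, threePointLine B a c b, threePointLine B c a b}

variable {d : V → V → ℝ}

lemma mem_lineQM_iff {x y w : V} (hxy : x ≠ y) (hxw : x ≠ w) (hyw : y ≠ w) :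
    w ∈ lineQM d x y ↔ (w, x, y) ∈ betweennessQM d ∨ (x, w, y) ∈ betweennessQM d ∨
      (x, y, w) ∈ betweennessQM d := by
  simp only [lineQM, betweennessQM, BtwQM, Set.mem_ofPred_eq, ne_eq, hxy, hxw, hyw, Ne.symm hxw,
    Ne.symm hyw, not_false_eq_true, true_and]

lemma lineQM_eq_threePointLine (hd : IsQuasiMetric d) {x y w : V} (hxy : x ≠ y) (hxw : x ≠ w)
    (hyw : y ≠ w) (hV : ∀ z, z = x ∨ z = y ∨ z = w) :
    lineQM d x y = threePointLine (betweennessQM d) x y w := by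
  rw [threePointLine]
  split_ifs with hw <;> rw [← mem_lineQM_iff hxy hxw hyw] at hw
  · refine Set.eq_univ_of_forall fun z => ?_
    rcases hV z with rfl | rfl | rfl
    exacts [hd.left_mem_lineQM _ _, hd.right_mem_lineQM _ _, hw]
  · refine Set.Subset.antisymm (fun z hz => ?_) ?_
    · rcases hV z with rfl | rfl | rfl
      exacts [Or.inl rfl, Or.inr rfl, absurd hz hw]
    · rintro z (rfl | rfl)
      exacts [hd.left_mem_lineQM _ _, hd.right_mem_lineQM _ _]

lemma linesQM_eq_of_forall_eq_or {a b c : V} (hab : a ≠ b) (hbc : b ≠ c) (hac : a ≠ c)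
    (hV : ∀ z, z = a ∨ z = b ∨ z = c) :
    linesQM d = {lineQM d a b, lineQM d b a, lineQM d b c,
      lineQM d c b, lineQM d a c, lineQM d c a} := by
  ext ℓ
  simp only [linesQM, Set.mem_ofPred_eq, Set.mem_insert_iff, Set.mem_singleton_iff]
  constructor
  · rintro ⟨x, y, hxy, rfl⟩
    rcases hV x with rfl | rfl | rfl <;> rcases hV y with rfl | rfl | rfl <;> tauto
  · rintro (rfl | rfl | rfl | rfl | rfl | rfl)
    exacts [⟨a, b, hab, rfl⟩, ⟨b, a, hab.symm, rfl⟩, ⟨b, c, hbc, rfl⟩,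
      ⟨c, b, hbc.symm, rfl⟩, ⟨a, c, hac, rfl⟩, ⟨c, a, hac.symm, rfl⟩]

lemma linesQM_eq_threePointLines (hd : IsQuasiMetric d) {a b c : V} (hab : a ≠ b) (hbc : b ≠ c)
    (hac : a ≠ c) (hV : ∀ z, z = a ∨ z = b ∨ z = c) :
    linesQM d = threePointLines (betweennessQM d) a b c := by
  rw [linesQM_eq_of_forall_eq_or hab hbc hac hV, threePointLines,
    lineQM_eq_threePointLine hd hab hac hbc hV,
    lineQM_eq_threePointLine hd hab.symm hbc hac ?_,
    lineQM_eq_threePointLine hd hbc hab.symm hac.symm ?_,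
    lineQM_eq_threePointLine hd hbc.symm hac.symm hab.symm ?_,
    lineQM_eq_threePointLine hd hac hab hbc.symm ?_,
    lineQM_eq_threePointLine hd hac.symm hbc.symm hab ?_]
  all_goals intro z; have := hV z; tauto

end ThreePoints

section Counting

variable {V : Type*} {a b c : V}

lemma threePointLines_empty :
    threePointLines ∅ a b c = {{a, b}, {b, c}, {a, c}} := by
  simp [threePointLines, threePointLine, Set.pair_comm b a, Set.pair_comm c b, Set.pair_comm c a]

lemma threePointLines_singleton (hab : a ≠ b) (hbc : b ≠ c) (hac : a ≠ c) :
    threePointLines {(a, b, c)} a b c = {Set.univ, {a, b}, {b, c}, {a, c}} := by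
  simp [threePointLines, threePointLine, hab, hbc, hac, hab.symm, hbc.symm, hac.symm,
    Set.pair_comm b a, Set.pair_comm c b, Set.pair_comm c a, Set.insert_comm _ (Set.univ : Set V)]

lemma threePointLines_pair_shift (hab : a ≠ b) (hbc : b ≠ c) (hac : a ≠ c) :
    threePointLines {(a, b, c), (b, c, a)} a b c = {Set.univ, {b, c}} := by
  simp [threePointLines, threePointLine, hab, hbc, hac, hab.symm, hbc.symm, hac.symm,
    Set.pair_comm c b, Set.pair_comm _ (Set.univ : Set V)]

lemma threePointLines_pair_reverse (hab : a ≠ b) (hbc : b ≠ c) (hac : a ≠ c) :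
    threePointLines {(a, b, c), (c, b, a)} a b c = {Set.univ} := by
  simp [threePointLines, threePointLine, hab, hbc, hac, hab.symm, hbc.symm, hac.symm]

lemma threePointLines_cyclic (hab : a ≠ b) (hbc : b ≠ c) (hac : a ≠ c) :
    threePointLines {(a, b, c), (b, c, a), (c, a, b)} a b c = {Set.univ} := by
  simp [threePointLines, threePointLine, hab, hbc, hac, hab.symm, hbc.symm, hac.symm]

lemma univ_ne_pair_of_ne (hab : a ≠ b) (hbc : b ≠ c) (hac : a ≠ c) (x y : V) :
    (Set.univ : Set V) ≠ {x, y} := by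
  intro h
  have ha : a ∈ ({x, y} : Set V) := h ▸ Set.mem_univ a
  have hb : b ∈ ({x, y} : Set V) := h ▸ Set.mem_univ b
  have hc : c ∈ ({x, y} : Set V) := h ▸ Set.mem_univ c
  simp only [Set.mem_insert_iff, Set.mem_singleton_iff] at ha hb hc
  grind

lemma ncard_pairs_of_ne (hab : a ≠ b) (hbc : b ≠ c) (hac : a ≠ c) :
    ({{a, b}, {b, c}, {a, c}} : Set (Set V)).ncard = 3 := by
  rw [Set.ncard_insert_of_notMem, Set.ncard_pair]
  · simp [Set.pair_eq_pair_iff, hab.symm, hbc, hac.symm]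
  · simp [Set.pair_eq_pair_iff, hab, hac, hbc]

lemma ncard_insert_univ_pairs_of_ne (hab : a ≠ b) (hbc : b ≠ c) (hac : a ≠ c) :
    ({Set.univ, {a, b}, {b, c}, {a, c}} : Set (Set V)).ncard = 4 := by
  rw [Set.ncard_insert_of_notMem, ncard_pairs_of_ne hab hbc hac]
  simp [univ_ne_pair_of_ne hab hbc hac]

end Counting

/-- line counts of quasi-metric spaces on a three-element set
`{a, b, c}` according to their betweenness: `∅` gives exactly 3 lines,
`{(a,b,c)}` gives 4, `{(a,b,c),(b,c,a)}` gives 2, `{(a,b,c),(c,b,a)}` gives a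
single line which is universal, and `{(a,b,c),(b,c,a),(c,a,b)}` gives a single
line which is universal. -/
theorem stmt_19 (V : Type) (d : V → V → ℝ) (hd : IsQuasiMetric d)
    (a b c : V) (hab : a ≠ b) (hbc : b ≠ c) (hac : a ≠ c)
    (hV : ∀ x : V, x = a ∨ x = b ∨ x = c) :
    ({t : V × V × V | BtwQM d t.1 t.2.1 t.2.2} = ∅ → (linesQM d).ncard = 3) ∧
    ({t : V × V × V | BtwQM d t.1 t.2.1 t.2.2} = {(a, b, c)} →
      (linesQM d).ncard = 4) ∧
    ({t : V × V × V | BtwQM d t.1 t.2.1 t.2.2} = {(a, b, c), (b, c, a)} →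
      (linesQM d).ncard = 2) ∧
    ({t : V × V × V | BtwQM d t.1 t.2.1 t.2.2} = {(a, b, c), (c, b, a)} →
      linesQM d = {(Set.univ : Set V)}) ∧
    ({t : V × V × V | BtwQM d t.1 t.2.1 t.2.2} = {(a, b, c), (b, c, a), (c, a, b)} →
      linesQM d = {(Set.univ : Set V)}) := by
  rw [linesQM_eq_threePointLines hd hab hbc hac hV, betweennessQM]
  refine ⟨fun hB => ?_, fun hB => ?_, fun hB => ?_, fun hB => ?_, fun hB => ?_⟩ <;> rw [hB]
  · rw [threePointLines_empty, ncard_pairs_of_ne hab hbc hac]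
  · rw [threePointLines_singleton hab hbc hac, ncard_insert_univ_pairs_of_ne hab hbc hac]
  · rw [threePointLines_pair_shift hab hbc hac,
      Set.ncard_pair (univ_ne_pair_of_ne hab hbc hac _ _)]
  · exact threePointLines_pair_reverse hab hbc hac
  · exact threePointLines_cyclic hab hbc hac
end
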